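/- arXiv:1603.06265 — 6 statements merged into one kernel-verified Lean document; each statement's English description precedes it below -/
import Mathlib

section
/- Regret bound for multiplicative weights with nonuniform initial weights and per-expert learning rates: for every x* ∈ X and every T, Σ_{t=1}^{T} ℓ_t(A_t) ≤ Σ_{t=1}^{T} ℓ_t(x*) + ε(x*)·Σ_{t=1}^{T} (ℓ_t(A_t) − ℓ_t(x*))² + ln(1/w_1(x*))/ε(x*). -/
/-!
Track the potential `log w_t(x*)`. One round multiplies `w_t(x*)` by `1 + z_t`, where
`z_t = ε(x*) (ℓ_t(A_t) - ℓ_t(x*)) ≥ -1/2`, and `log (1 + z) ≥ z - z²` on that range, so the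
potential grows by at least `z_t - z_t²` per round. Since the update preserves total weight,
`w_{T+1}(x*) ≤ 1` and the potential ends nonpositive; dividing the accumulated bound
`log w_1(x*) + Σ (z_t - z_t²) ≤ 0` by `ε(x*)` gives the regret bound.
-/

open Finset Real

theorem Real.sub_sq_le_log_one_add {z : ℝ} (hz : -(1 / 2) ≤ z) :
    z - z ^ 2 ≤ log (1 + z) := by
  set u := z ^ 2 - z
  -- For `z ≥ 0`, `exp u ≥ 1 + u` suffices since `(1 + z) (1 + u) = 1 + z³`; for `z < 0` the
  -- quadratic term of `exp` is needed.
  have hmul : 1 ≤ (1 + z) * exp u := by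
    rcases le_or_gt 0 z with hz0 | hz0
    · nlinarith [mul_le_mul_of_nonneg_left (add_one_le_exp u) (by linarith : 0 ≤ 1 + z),
        pow_nonneg hz0 3]
    · have hu : 0 ≤ u := by nlinarith
      nlinarith [quadratic_le_exp_of_nonneg hu, sq_nonneg (z * (z + 1 / 2))]
  have hlog : 0 ≤ log ((1 + z) * exp u) := log_nonneg hmul
  rw [log_mul (by linarith) (exp_pos u).ne', log_exp] at hlog
  linarith

theorem neg_half_le_mul_sub {e a b : ℝ} (he₀ : 0 ≤ e) (he : e ≤ 1 / 4) (ha : |a| ≤ 1)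
    (hb : |b| ≤ 1) : -(1 / 2) ≤ e * (a - b) := by
  obtain ⟨ha₁, ha₂⟩ := abs_le.mp ha
  obtain ⟨hb₁, hb₂⟩ := abs_le.mp hb
  nlinarith

theorem Finset.add_sum_Icc_le_of_le_succ {f g : ℕ → ℝ} {T : ℕ}
    (h : ∀ t ∈ Icc 1 T, f t + g t ≤ f (t + 1)) : f 1 + ∑ t ∈ Icc 1 T, g t ≤ f (T + 1) := by
  have hsum : ∑ t ∈ Icc 1 T, g t ≤ ∑ t ∈ Icc 1 T, (f (t + 1) - f t) :=
    sum_le_sum fun t ht => by linarith [h t ht]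
  rw [← Ico_add_one_right_eq_Icc] at hsum ⊢
  rw [sum_Ico_sub f (by omega)] at hsum
  linarith

theorem Finset.sum_le_of_log_add_sum_sub_sq_nonpos {ι : Type*} (s : Finset ι) (d : ι → ℝ)
    {e p : ℝ} (he : 0 < e) (h : log p + ∑ i ∈ s, (e * d i - (e * d i) ^ 2) ≤ 0) :
    ∑ i ∈ s, d i ≤ e * ∑ i ∈ s, d i ^ 2 + log (1 / p) / e := by
  have hsplit : ∑ i ∈ s, (e * d i - (e * d i) ^ 2)
      = e * (∑ i ∈ s, d i - e * ∑ i ∈ s, d i ^ 2) := by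
    simp only [mul_sub, mul_sum, ← sum_sub_distrib]
    exact sum_congr rfl fun i _ => by ring
  have hregret : ∑ i ∈ s, d i - e * ∑ i ∈ s, d i ^ 2 ≤ log (1 / p) / e := by
    rw [one_div, log_inv, le_div_iff₀' he]
    linarith
  linarith

namespace MultiplicativeWeights

variable {X : Type*} [Fintype X]

section Round

variable (v ε ℓ : X → ℝ)

/-- The distribution `A_t` played from the weights `v = w_t` (junk value `0` if `∑ v ε = 0`). -/
noncomputable def play (x : X) : ℝ := v x * ε x / ∑ y, v y * ε y

noncomputable def expectedLoss : ℝ := ∑ x, play v ε x * ℓ x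

noncomputable def update (x : X) : ℝ := v x * (1 + ε x * (expectedLoss v ε ℓ - ℓ x))

variable {v ε ℓ}

theorem abs_expectedLoss_le (hv : ∀ x, 0 ≤ v x) (hε : ∀ x, 0 ≤ ε x)
    (hℓ : ∀ x, |ℓ x| ≤ 1) : |expectedLoss v ε ℓ| ≤ 1 := by
  by_cases hS : ∑ y, v y * ε y = 0
  · simp [expectedLoss, play, hS]
  have hplay : ∀ x, 0 ≤ play v ε x := fun x =>
    div_nonneg (mul_nonneg (hv x) (hε x)) (sum_nonneg fun y _ => mul_nonneg (hv y) (hε y))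
  calc |expectedLoss v ε ℓ| ≤ ∑ x, |play v ε x * ℓ x| := abs_sum_le_sum_abs _ _
    _ ≤ ∑ x, play v ε x := sum_le_sum fun x _ => by
        rw [abs_mul, abs_of_nonneg (hplay x)]
        exact mul_le_of_le_one_right (hplay x) (hℓ x)
    _ = 1 := by simp only [play]; rw [← sum_div, div_self hS]

theorem sum_update (hS : ∑ y, v y * ε y ≠ 0) : ∑ x, update v ε ℓ x = ∑ x, v x := by
  have hmean : (∑ x, v x * ε x) * expectedLoss v ε ℓ = ∑ x, v x * ε x * ℓ x := by
    simp only [expectedLoss, play, mul_sum]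
    exact sum_congr rfl fun x _ => by field_simp
  calc ∑ x, update v ε ℓ x
      = ∑ x, v x + ((∑ x, v x * ε x) * expectedLoss v ε ℓ - ∑ x, v x * ε x * ℓ x) := by
        simp only [update, sum_mul, ← sum_sub_distrib, ← sum_add_distrib]
        exact sum_congr rfl fun x _ => by ring
    _ = ∑ x, v x := by rw [hmean, sub_self, add_zero]

variable (hv : ∀ x, 0 < v x) (hε : ∀ x, 0 < ε x ∧ ε x ≤ 1 / 4) (hℓ : ∀ x, |ℓ x| ≤ 1)
include hv hε hℓ

theorem neg_half_le_rate_mul_regret (x : X) :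
    -(1 / 2) ≤ ε x * (expectedLoss v ε ℓ - ℓ x) :=
  neg_half_le_mul_sub (hε x).1.le (hε x).2
    (abs_expectedLoss_le (fun y => (hv y).le) (fun y => (hε y).1.le) hℓ) (hℓ x)

theorem update_pos (x : X) : 0 < update v ε ℓ x :=
  mul_pos (hv x) (by linarith [neg_half_le_rate_mul_regret hv hε hℓ x])

theorem log_add_le_log_update (x : X) :
    log (v x) + (ε x * (expectedLoss v ε ℓ - ℓ x) - (ε x * (expectedLoss v ε ℓ - ℓ x)) ^ 2)
      ≤ log (update v ε ℓ x) := by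
  have hz := neg_half_le_rate_mul_regret hv hε hℓ x
  rw [update, log_mul (hv x).ne' (by linarith)]
  linarith [sub_sq_le_log_one_add hz]

end Round

section Run

variable {w : ℕ → X → ℝ} {ε : X → ℝ} {ℓ : ℕ → X → ℝ} (hε : ∀ x, 0 < ε x ∧ ε x ≤ 1 / 4)
  (hℓ : ∀ t x, |ℓ t x| ≤ 1) (hw : ∀ x, 0 < w 1 x)
  (hrun : ∀ t, 1 ≤ t → w (t + 1) = update (w t) ε (ℓ t))
include hε hℓ hw hrun

theorem pos_of_run {t : ℕ} (ht : 1 ≤ t) (x : X) : 0 < w t x := by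
  induction t, ht using Nat.le_induction generalizing x with
  | base => exact hw x
  | succ t ht ih => exact hrun t ht ▸ update_pos ih hε (hℓ t) x

theorem sum_eq_of_run [Nonempty X] {t : ℕ} (ht : 1 ≤ t) : ∑ x, w t x = ∑ x, w 1 x := by
  induction t, ht using Nat.le_induction with
  | base => rfl
  | succ t ht ih =>
    have hS : 0 < ∑ y, w t y * ε y :=
      sum_pos (fun y _ => mul_pos (pos_of_run hε hℓ hw hrun ht y) (hε y).1) univ_nonempty
    rw [hrun t ht, sum_update hS.ne', ih]

theorem log_add_sum_le_log_of_run (x : X) (T : ℕ) :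
    log (w 1 x) + ∑ t ∈ Icc 1 T, (ε x * (expectedLoss (w t) ε (ℓ t) - ℓ t x)
      - (ε x * (expectedLoss (w t) ε (ℓ t) - ℓ t x)) ^ 2) ≤ log (w (T + 1) x) :=
  add_sum_Icc_le_of_le_succ (f := fun t => log (w t x)) fun t ht => by
    rw [hrun t (mem_Icc.mp ht).1]
    exact log_add_le_log_update (pos_of_run hε hℓ hw hrun (mem_Icc.mp ht).1) hε (hℓ t) x

end Run

end MultiplicativeWeights

open MultiplicativeWeights in
theorem mwm_regret_bound_general
    {X : Type*} [Fintype X]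
    (w : ℕ → X → ℝ) (ε : X → ℝ) (ℓ : ℕ → X → ℝ)
    (A : ℕ → X → ℝ) (ℓA : ℕ → ℝ)
    (hw1 : ∀ x, 0 < w 1 x ∧ w 1 x ≤ 1) (hwsum : ∑ x, w 1 x = 1)
    (hε : ∀ x, 0 < ε x ∧ ε x ≤ 1 / 4)
    (hℓ : ∀ t x, -1 ≤ ℓ t x ∧ ℓ t x ≤ 1)
    (hA : ∀ t x, A t x = w t x * ε x / ∑ y, w t y * ε y)
    (hℓA : ∀ t, ℓA t = ∑ x, A t x * ℓ t x)
    (hrec : ∀ t x, 1 ≤ t → w (t + 1) x = w t x * (1 + ε x * (ℓA t - ℓ t x)))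
    (xstar : X) (T : ℕ) :
    ∑ t ∈ Finset.Icc 1 T, ℓA t ≤
      ∑ t ∈ Finset.Icc 1 T, ℓ t xstar
        + ε xstar * ∑ t ∈ Finset.Icc 1 T, (ℓA t - ℓ t xstar) ^ 2
        + Real.log (1 / w 1 xstar) / ε xstar := by
  have hℓ' : ∀ t x, |ℓ t x| ≤ 1 := fun t x => abs_le.mpr (hℓ t x)
  have hℓA' : ∀ t, ℓA t = expectedLoss (w t) ε (ℓ t) := fun t => by
    simp only [hℓA, hA, expectedLoss, play]
  have hstep : ∀ t, 1 ≤ t → w (t + 1) = update (w t) ε (ℓ t) := fun t ht => by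
    ext x; rw [hrec t x ht, update, hℓA']
  have hw : ∀ x, 0 < w 1 x := fun x => (hw1 x).1
  have hpotential := log_add_sum_le_log_of_run hε hℓ' hw hstep xstar T
  simp only [← hℓA'] at hpotential
  have hfinal : log (w (T + 1) xstar) ≤ 0 := by
    have : Nonempty X := ⟨xstar⟩
    have hpos := pos_of_run hε hℓ' hw hstep (Nat.le_add_left 1 T)
    refine log_nonpos (hpos xstar).le ?_
    rw [← hwsum, ← sum_eq_of_run hε hℓ' hw hstep (Nat.le_add_left 1 T)]
    exact single_le_sum (fun x _ => (hpos x).le) (mem_univ xstar)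
  have hregret := sum_le_of_log_add_sum_sub_sq_nonpos (Icc 1 T) (fun t => ℓA t - ℓ t xstar)
    (hε xstar).1 (hpotential.trans hfinal)
  rw [sum_sub_distrib] at hregret
  linarith

/-- Regret bound for multiplicative weights with nonuniform initial
weights and per-expert learning rates. -/
theorem mwm_regret_bound
    {X : Type*} [Fintype X] [Nonempty X]
    (w : ℕ → X → ℝ) (ε : X → ℝ) (ℓ : ℕ → X → ℝ)
    (A : ℕ → X → ℝ) (ℓA : ℕ → ℝ)
    (hw1 : ∀ x, 0 < w 1 x ∧ w 1 x ≤ 1) (hwsum : ∑ x, w 1 x = 1)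
    (hε : ∀ x, 0 < ε x ∧ ε x ≤ 1 / 4)
    (hℓ : ∀ t x, -1 ≤ ℓ t x ∧ ℓ t x ≤ 1)
    (hA : ∀ t x, A t x = w t x * ε x / ∑ y, w t y * ε y)
    (hℓA : ∀ t, ℓA t = ∑ x, A t x * ℓ t x)
    (hrec : ∀ t x, 1 ≤ t → w (t + 1) x = w t x * (1 + ε x * (ℓA t - ℓ t x)))
    (xstar : X) (T : ℕ) :
    ∑ t ∈ Finset.Icc 1 T, ℓA t ≤
      ∑ t ∈ Finset.Icc 1 T, ℓ t xstar
        + ε xstar * ∑ t ∈ Finset.Icc 1 T, (ℓA t - ℓ t xstar) ^ 2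
        + Real.log (1 / w 1 xstar) / ε xstar :=
  mwm_regret_bound_general w ε ℓ A ℓA hw1 hwsum hε hℓ hA hℓA hrec xstar T
end

section
/- Specialists identity over a product index set: under the stated definitions, Σ_{(x,V)∈X×𝒱} A(x,V)·ℓ^A(x,V) = ℓ(p). -/
open Finset

theorem sum_mul_convex_mix {ι R : Type*} [Fintype ι] [CommRing R] (A z a : ι → R) (c : R) :
    ∑ i, A i * (z i * a i + (1 - z i) * c) =
      ∑ i, z i * A i * a i + (∑ i, A i - ∑ i, z i * A i) * c := by
  rw [sub_mul, sum_mul, sum_mul, add_sub_assoc', ← sum_add_distrib, ← sum_sub_distrib]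
  exact sum_congr rfl fun i _ => by ring

theorem sum_prod_mul_fst_eq_mul_sum_marginal {X V 𝕜 : Type*} [Fintype X] [Fintype V] [Field 𝕜]
    (w : X × V → 𝕜) (f : X → 𝕜) {W : 𝕜} (hW : W ≠ 0) :
    ∑ q, w q * f q.1 = W * ∑ x, (∑ v, w (x, v)) / W * f x := by
  rw [Fintype.sum_prod_type, mul_sum]
  refine sum_congr rfl fun x _ => ?_
  rw [← mul_assoc, mul_div_cancel₀ _ hW, sum_mul]

theorem specialists_identity_product_general
    {X V : Type*} [Fintype X] [Fintype V]
    (A z : X × V → ℝ) (ℓ : X → ℝ)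
    (hAsum : ∑ q, A q = 1)
    (w : X × V → ℝ) (hw : ∀ q, w q = z q * A q)
    (W : ℝ) (hW : W = ∑ q, w q) (hWpos : 0 < W)
    (p : X → ℝ) (hp : ∀ x, p x = (∑ v : V, w (x, v)) / W)
    (ℓp : ℝ) (hℓp : ℓp = ∑ x, p x * ℓ x)
    (ℓA : X × V → ℝ) (hℓA : ∀ q, ℓA q = z q * ℓ q.1 + (1 - z q) * ℓp) :
    ∑ q, A q * ℓA q = ℓp := by
  have hwℓ : ∑ q, w q * ℓ q.1 = W * ℓp := by
    simp only [hℓp, hp, sum_prod_mul_fst_eq_mul_sum_marginal w ℓ hWpos.ne']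
  calc ∑ q, A q * ℓA q
      = ∑ q, w q * ℓ q.1 + (∑ q, A q - ∑ q, w q) * ℓp := by
        simp only [hℓA, sum_mul_convex_mix, hw]
    _ = ℓp := by rw [hwℓ, hAsum, ← hW]; ring

/-- Specialists identity over a product index set. -/
theorem specialists_identity_product
    {X V : Type*} [Fintype X] [Fintype V] [Nonempty X] [Nonempty V]
    (A z : X × V → ℝ) (ℓ : X → ℝ)
    (hA : ∀ q, 0 ≤ A q) (hAsum : ∑ q, A q = 1)
    (hz : ∀ q, 0 ≤ z q ∧ z q ≤ 1)
    (w : X × V → ℝ) (hw : ∀ q, w q = z q * A q)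
    (W : ℝ) (hW : W = ∑ q, w q) (hWpos : 0 < W)
    (p : X → ℝ) (hp : ∀ x, p x = (∑ v : V, w (x, v)) / W)
    (ℓp : ℝ) (hℓp : ℓp = ∑ x, p x * ℓ x)
    (ℓA : X × V → ℝ) (hℓA : ∀ q, ℓA q = z q * ℓ q.1 + (1 - z q) * ℓp) :
    ∑ q, A q * ℓA q = ℓp :=
  specialists_identity_product_general A z ℓ hAsum w hw W hW hWpos p hp ℓp hℓp ℓA hℓA
end

section
/- Regret bound for the basic collaborative algorithm: for every expert x ∈ X and every set of users H ⊆ U, Algorithm 1 satisfies Σ_{t≤T : u_t∈H} ℓ_t(p_t) ≤ Σ_{t≤T : u_t∈H} ℓ_t(x) + 10·√(T·(ln M + N)). -/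
/-!
Both layers of Algorithm 1 are multiplicative-weights updates whose weights stay at most 1, so
the usual potential argument (with `log (1 + y) ≥ y - 3/2 y²` for `|y| ≤ 1/2`) bounds the total
gain of each weight by `log (1 / initial weight) / ε + 6 ε n` over `n` active rounds.

Write `D t = ℓ_t(p_t) - ℓ_t(x)`. The combined prediction is a fixed point of the expert layer,
`∑ y, a_t(y) ℓ^A_t(y) = ℓ_t(p_t)`, so the gain of `a(x)` in round `t` is `z_t^x D t`. On the rounds
of user `v` the confidence `β^{xv}` has gain `(1 - β) D t`, and `1 - β^{xv}` is updated
multiplicatively with gain `-β D t`. The regret of a round of a user in `H` is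
`z D + (1 - z) D`, and `0 = z D - z D` for any other round; summing the three bounds and
inserting the learning rates gives `7 (√(T ln M) + √(T N)) ≤ 10 √(T (ln M + N))`.
-/

open Finset Real

theorem sub_three_halves_mul_sq_le_log_one_add {y : ℝ} (hy : |y| ≤ 1 / 2) :
    y - 3 / 2 * y ^ 2 ≤ log (1 + y) := by
  have h := abs_le.1 (abs_log_sub_add_sum_range_le (x := -y) (by rw [abs_neg]; linarith) 2)
  have hcube : |y| ^ 3 / (1 - |y|) ≤ y ^ 2 := by
    rw [div_le_iff₀ (by linarith), ← sq_abs y]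
    nlinarith [abs_nonneg y]
  simp only [sum_range_succ, sum_range_zero, sub_neg_eq_add, abs_neg] at h
  norm_num at h
  nlinarith [h.1]

theorem abs_mul_le_of_nonneg_of_le_one {b D c : ℝ} (hb : 0 ≤ b) (hb1 : b ≤ 1) (hD : |D| ≤ c) :
    |b * D| ≤ c := by
  rw [abs_mul, abs_of_nonneg hb]
  exact (mul_le_of_le_one_left (abs_nonneg D) hb1).trans hD

theorem eq_mul_prod_Icc_of_succ_eq_mul {g f : ℕ → ℝ} {n : ℕ}
    (h : ∀ t ∈ Icc 1 n, g (t + 1) = g t * f t) : g (n + 1) = g 1 * ∏ t ∈ Icc 1 n, f t := by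
  induction n with
  | zero => simp
  | succ n ih =>
    rw [prod_Icc_succ_top (by omega), ← mul_assoc, ← ih fun t ht => h t (by grind),
      h (n + 1) (by simp)]

theorem sum_le_log_inv_div_add_of_succ_eq_mul {g d : ℕ → ℝ} {ε : ℝ} {T : ℕ} (hε : 0 < ε)
    (hg1 : 0 < g 1) (hgT : g (T + 1) ≤ 1) (hd : ∀ t ∈ Icc 1 T, |ε * d t| ≤ 1 / 2)
    (hg : ∀ t ∈ Icc 1 T, g (t + 1) = g t * (1 + ε * d t)) :
    ∑ t ∈ Icc 1 T, d t ≤ log (g 1)⁻¹ / ε + 3 / 2 * ε * ∑ t ∈ Icc 1 T, d t ^ 2 := by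
  have hfac : ∀ t ∈ Icc 1 T, 0 < 1 + ε * d t := fun t ht => by
    linarith [(abs_le.1 (hd t ht)).1]
  have hlog : ∑ t ∈ Icc 1 T, log (1 + ε * d t) ≤ log (g 1)⁻¹ := by
    have hpos : 0 < g (T + 1) := by
      rw [eq_mul_prod_Icc_of_succ_eq_mul hg]; exact mul_pos hg1 (prod_pos hfac)
    rw [← log_prod fun t ht => (hfac t ht).ne', log_inv, ← sub_nonpos, sub_neg_eq_add,
      ← log_mul (prod_pos hfac).ne' hg1.ne', mul_comm, ← eq_mul_prod_Icc_of_succ_eq_mul hg]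
    exact log_nonpos hpos.le hgT
  have hterm : ∀ t ∈ Icc 1 T, ε * d t - 3 / 2 * ε ^ 2 * d t ^ 2 ≤ log (1 + ε * d t) :=
    fun t ht => by
      have := sub_three_halves_mul_sq_le_log_one_add (hd t ht)
      linarith [mul_pow ε (d t) 2]
  have hsum := (sum_le_sum hterm).trans hlog
  rw [sum_sub_distrib, ← mul_sum, ← mul_sum] at hsum
  rw [← sub_le_iff_le_add, le_div_iff₀' hε]
  linear_combination hsum

theorem sum_filter_le_log_inv_div_add_of_succ_eq_mul {g d : ℕ → ℝ} {ε : ℝ} {T : ℕ}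
    {P : ℕ → Prop} [DecidablePred P] (hε : 0 < ε) (hε4 : ε ≤ 1 / 4) (hg1 : 0 < g 1)
    (hgT : g (T + 1) ≤ 1) (hd : ∀ t ∈ Icc 1 T, P t → |d t| ≤ 2)
    (hg : ∀ t ∈ Icc 1 T, P t → g (t + 1) = g t * (1 + ε * d t))
    (hfix : ∀ t ∈ Icc 1 T, ¬P t → g (t + 1) = g t) :
    ∑ t ∈ Icc 1 T with P t, d t ≤ log (g 1)⁻¹ / ε + 6 * ε * #{t ∈ Icc 1 T | P t} := by
  have hsq : ∑ t ∈ Icc 1 T, (if P t then d t else 0) ^ 2 ≤ 4 * #{t ∈ Icc 1 T | P t} := by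
    rw [card_filter]
    push_cast
    rw [mul_sum]
    gcongr with t ht
    split_ifs with hP
    · rw [← sq_abs]; nlinarith [abs_nonneg (d t), hd t ht hP]
    · norm_num
  have h := sum_le_log_inv_div_add_of_succ_eq_mul (d := fun t => if P t then d t else 0)
    hε hg1 hgT
    (fun t ht => by
      split_ifs with hP
      · rw [abs_mul, abs_of_pos hε]; nlinarith [abs_nonneg (d t), hd t ht hP]
      · norm_num)
    (fun t ht => by split_ifs with hP <;> simp [hP, hg, hfix, ht])
  rw [sum_filter]
  nlinarith [mul_le_mul_of_nonneg_left hsq hε.le]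

theorem sum_filter_confidence_gain_le {b D : ℕ → ℝ} {ε : ℝ} {T : ℕ} {P : ℕ → Prop}
    [DecidablePred P] (hε : 0 < ε) (hε4 : ε ≤ 1 / 4) (hb : ∀ t, 1 ≤ t → 0 < b t ∧ b t < 1)
    (hb1 : b 1 = 1 / 2) (hD : ∀ t ∈ Icc 1 T, P t → |D t| ≤ 2)
    (hup : ∀ t ∈ Icc 1 T, P t → b (t + 1) = b t * (1 + ε * ((1 - b t) * D t)))
    (hfix : ∀ t ∈ Icc 1 T, ¬P t → b (t + 1) = b t) :
    ∑ t ∈ Icc 1 T with P t, (1 - b t) * D t ≤ log 2 / ε + 6 * ε * #{t ∈ Icc 1 T | P t} ∧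
      ∑ t ∈ Icc 1 T with P t, -(b t * D t) ≤ log 2 / ε + 6 * ε * #{t ∈ Icc 1 T | P t} := by
  have hbT := hb (T + 1) (by omega)
  have hlog : log (1 / 2 : ℝ)⁻¹ = log 2 := by norm_num
  constructor
  · have h := sum_filter_le_log_inv_div_add_of_succ_eq_mul (g := b) hε hε4
      (by rw [hb1]; norm_num) hbT.2.le
      (fun t ht hP => have hbt := hb t (mem_Icc.1 ht).1
        abs_mul_le_of_nonneg_of_le_one (by linarith) (by linarith) (hD t ht hP))
      hup hfix
    rwa [hb1, hlog] at h
  · have h := sum_filter_le_log_inv_div_add_of_succ_eq_mul (g := fun t => 1 - b t)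
      (d := fun t => -(b t * D t)) hε hε4 (by rw [hb1]; norm_num) (by linarith)
      (fun t ht hP => have hbt := hb t (mem_Icc.1 ht).1
        abs_neg (b t * D t) ▸ abs_mul_le_of_nonneg_of_le_one hbt.1.le hbt.2.le (hD t ht hP))
      (fun t ht hP => by rw [hup t ht hP]; ring) (fun t ht hP => by rw [hfix t ht hP])
    rwa [hb1, show (1 : ℝ) - 1 / 2 = 1 / 2 by norm_num, hlog] at h

theorem sum_filter_mem_le_of_fiberwise_le {ι U : Type*} [Fintype U] [DecidableEq U]
    (s : Finset ι) (u : ι → U) (H : Finset U) (b : ι → U → ℝ) (D : ι → ℝ) {A B κ : ℝ}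
    (hA : ∑ i ∈ s, b i (u i) * D i ≤ A)
    (hH : ∀ v ∈ H, ∑ i ∈ s with u i = v, (1 - b i v) * D i ≤ B + κ * #{i ∈ s | u i = v})
    (hHc : ∀ v ∉ H, ∑ i ∈ s with u i = v, -(b i v * D i) ≤ B + κ * #{i ∈ s | u i = v}) :
    ∑ i ∈ s with u i ∈ H, D i ≤ A + Fintype.card U * B + κ * #s := by
  set e : U → ι → ℝ := fun v i => if v ∈ H then (1 - b i v) * D i else -(b i v * D i)
  have hsplit : ∑ i ∈ s with u i ∈ H, D i
      = ∑ i ∈ s, b i (u i) * D i + ∑ v, ∑ i ∈ s with u i = v, e v i := by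
    rw [sum_filter, ← sum_fiberwise s u, ← sum_fiberwise s u, ← sum_add_distrib]
    refine sum_congr rfl fun v _ => ?_
    rw [← sum_add_distrib]
    refine sum_congr rfl fun i hi => ?_
    rw [(mem_filter.1 hi).2]
    simp only [e]
    split_ifs <;> ring
  have he : ∀ v, ∑ i ∈ s with u i = v, e v i ≤ B + κ * #{i ∈ s | u i = v} := fun v => by
    by_cases hv : v ∈ H
    · simpa only [e, hv, if_true] using hH v hv
    · simpa only [e, hv, if_false] using hHc v hv
  have hcard : (#s : ℝ) = ∑ v, (#{i ∈ s | u i = v} : ℝ) := by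
    exact_mod_cast card_eq_sum_card_fiberwise fun i _ => mem_univ (u i)
  have hfibers := sum_le_sum fun v (_ : v ∈ univ) => he v
  rw [sum_add_distrib, sum_const, card_univ, nsmul_eq_mul, ← mul_sum, ← hcard] at hfibers
  linarith

theorem sum_mul_mix_eq_weighted_mean {X : Type*} [Fintype X] {a z p ℓ : X → ℝ} {W : ℝ}
    (ha : ∑ x, a x = 1) (hp : ∑ x, p x = 1) (hzp : ∀ x, z x * a x = W * p x) :
    ∑ x, a x * (z x * ℓ x + (1 - z x) * ∑ y, p y * ℓ y) = ∑ y, p y * ℓ y := by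
  set q := ∑ y, p y * ℓ y
  have hsummand : ∀ x, a x * (z x * ℓ x + (1 - z x) * q)
      = W * (p x * ℓ x) + a x * q - W * p x * q := fun x => by
    linear_combination (ℓ x - q) * hzp x
  rw [sum_congr rfl fun x _ => hsummand x, sum_sub_distrib, sum_add_distrib, ← mul_sum,
    ← sum_mul, ← sum_mul, ← mul_sum, ha, hp]
  ring

theorem abs_sum_mul_le_one {X : Type*} [Fintype X] {p ℓ : X → ℝ} (hp0 : ∀ x, 0 ≤ p x)
    (hp : ∑ x, p x = 1) (hℓ : ∀ x, |ℓ x| ≤ 1) : |∑ x, p x * ℓ x| ≤ 1 :=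
  calc |∑ x, p x * ℓ x| ≤ ∑ x, |p x * ℓ x| := abs_sum_le_sum_abs _ _
    _ ≤ ∑ x, p x := sum_le_sum fun x _ => by
      rw [abs_mul, abs_of_nonneg (hp0 x)]; exact mul_le_of_le_one_right (hp0 x) (hℓ x)
    _ = 1 := hp

theorem abs_le_one_and_sum_mul_mixed_loss_eq {X : Type*} [Fintype X] {a z w p ℓ ℓA : X → ℝ}
    {W q : ℝ} (ha0 : ∀ y, 0 < a y) (ha : ∑ y, a y = 1) (hz0 : ∀ y, 0 < z y)
    (hℓ : ∀ y, |ℓ y| ≤ 1) (hw : ∀ y, w y = z y * a y) (hW : W = ∑ y, w y) (hW0 : 0 < W)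
    (hp : ∀ y, p y = w y / W) (hq : q = ∑ y, p y * ℓ y)
    (hℓA : ∀ y, ℓA y = z y * ℓ y + (1 - z y) * q) :
    |q| ≤ 1 ∧ ∑ y, a y * ℓA y = q := by
  have hp0 : ∀ y, 0 ≤ p y := fun y => by
    rw [hp, hw]; exact div_nonneg (mul_pos (hz0 y) (ha0 y)).le hW0.le
  have hpsum : ∑ y, p y = 1 := by simp_rw [hp, ← sum_div, ← hW, div_self hW0.ne']
  simp_rw [hℓA, hq]
  exact ⟨abs_sum_mul_le_one hp0 hpsum hℓ, sum_mul_mix_eq_weighted_mean ha hpsum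
    fun y => by rw [hp, ← hw, mul_div_cancel₀ _ hW0.ne']⟩

theorem sqrt_div_mem_Ioc {c T : ℝ} (hc : 0 < c) (hcT : 16 * c ≤ T) :
    √(c / T) ∈ Set.Ioc 0 (1 / 4) :=
  ⟨sqrt_pos.2 (div_pos hc (by linarith)),
    (sqrt_le_left (by norm_num)).2 (by rw [div_le_iff₀ (by linarith)]; linarith)⟩

theorem div_sqrt_div {c T : ℝ} (hT : 0 ≤ T) : c / √(c / T) = √(T * c) := by
  rw [sqrt_div' c hT, div_div_eq_mul_div, mul_div_right_comm, div_sqrt, sqrt_mul hT, mul_comm]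

theorem sqrt_div_mul {c T : ℝ} (hT : 0 ≤ T) : √(c / T) * T = √(T * c) := by
  rw [sqrt_div' c hT, div_mul_eq_mul_div, mul_div_assoc, div_sqrt, sqrt_mul hT, mul_comm]

theorem learning_rate_tradeoff {L N T : ℝ} (hT : 0 ≤ T) (hL : 0 ≤ L) (hN : 0 ≤ N) :
    L / √(L / T) + 6 * √(L / T) * T + N * (log 2 / √(N / T)) + 6 * √(N / T) * T
      ≤ 10 * √(T * (L + N)) := by
  rw [mul_div_left_comm, div_sqrt_div hT, div_sqrt_div hT, mul_assoc 6, mul_assoc 6,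
    sqrt_div_mul hT, sqrt_div_mul hT]
  have hlog2 : log 2 ≤ 1 := by linarith [log_two_lt_d9]
  have hx := sqrt_nonneg (T * L)
  have hy := sqrt_nonneg (T * N)
  have hs : √(T * (L + N)) ^ 2 = √(T * L) ^ 2 + √(T * N) ^ 2 := by
    rw [sq_sqrt (by positivity), sq_sqrt (by positivity), sq_sqrt (by positivity)]; ring
  have h7 : 7 * (√(T * L) + √(T * N)) ≤ 10 * √(T * (L + N)) := by
    refine le_of_sq_le_sq ?_ (by positivity)
    nlinarith [sq_nonneg (√(T * L) - √(T * N))]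
  nlinarith [mul_le_mul_of_nonneg_right hlog2 hy]

theorem algorithm1_regret_bound_general
    {U X : Type*} [Fintype U] [Fintype X] [DecidableEq U]
    (N M T : ℕ)
    (hcardU : Fintype.card U = N)
    (hN1 : 1 ≤ N) (hM2 : 2 ≤ M)
    (hTN : 16 * N ≤ T) (hTM : 16 * Real.log M ≤ (T : ℝ))
    (u : ℕ → U) (ℓ : ℕ → X → ℝ)
    (hℓ : ∀ t x, -1 ≤ ℓ t x ∧ ℓ t x ≤ 1)
    (εA εB : ℝ)
    (hεA : εA = Real.sqrt (Real.log M / T))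
    (hεB : εB = Real.sqrt ((N : ℝ) / T))
    (a : ℕ → X → ℝ) (β : ℕ → X → U → ℝ)
    (ha1 : ∀ x, a 1 x = 1 / M)
    (hβ1 : ∀ x v, β 1 x v = 1 / 2)
    (z : ℕ → X → ℝ) (hz : ∀ t x, z t x = β t x (u t))
    (w : ℕ → X → ℝ) (hw : ∀ t x, w t x = z t x * a t x)
    (W : ℕ → ℝ) (hW : ∀ t, W t = ∑ x, w t x)
    (p : ℕ → X → ℝ) (hp : ∀ t x, p t x = w t x / W t)
    (ℓp : ℕ → ℝ) (hℓp : ∀ t, ℓp t = ∑ x, p t x * ℓ t x)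
    (ℓA : ℕ → X → ℝ)
    (hℓA : ∀ t x, ℓA t x = z t x * ℓ t x + (1 - z t x) * ℓp t)
    (ha : ∀ t x, 1 ≤ t →
      a (t + 1) x = a t x * (1 + εA * ((∑ y, a t y * ℓA t y) - ℓA t x)))
    (hβu : ∀ t x, 1 ≤ t →
      β (t + 1) x (u t) = β t x (u t) *
        (1 + εB * ((β t x (u t) * ℓ t x + (1 - β t x (u t)) * ℓp t) - ℓ t x)))
    (hβo : ∀ t x v, 1 ≤ t → v ≠ u t → β (t + 1) x v = β t x v)
    (hapos : ∀ t x, 1 ≤ t → 0 < a t x)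
    (hasum : ∀ t, 1 ≤ t → ∑ x, a t x = 1)
    (hβpos : ∀ t x v, 1 ≤ t → 0 < β t x v ∧ β t x v < 1)
    (hWpos : ∀ t, 1 ≤ t → 0 < W t)
    (x : X) (H : Finset U) :
    ∑ t ∈ (Finset.Icc 1 T).filter (fun t => u t ∈ H), ℓp t ≤
      (∑ t ∈ (Finset.Icc 1 T).filter (fun t => u t ∈ H), ℓ t x)
        + 10 * Real.sqrt ((T : ℝ) * (Real.log M + N)) := by
  subst hεA hεB
  have hM : (1 : ℝ) < M := by exact_mod_cast hM2
  obtain ⟨hεA0, hεA4⟩ := sqrt_div_mem_Ioc (log_pos hM) hTM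
  obtain ⟨hεB0, hεB4⟩ := sqrt_div_mem_Ioc (by exact_mod_cast hN1 : (0 : ℝ) < N)
    (by exact_mod_cast hTN : 16 * (N : ℝ) ≤ T)
  have hround : ∀ t ∈ Icc 1 T, |ℓp t| ≤ 1 ∧ ∑ y, a t y * ℓA t y = ℓp t := fun t ht =>
    have ht1 := (mem_Icc.1 ht).1
    abs_le_one_and_sum_mul_mixed_loss_eq (hapos t · ht1) (hasum t ht1)
      (fun y => hz t y ▸ (hβpos t y (u t) ht1).1) (fun y => abs_le.2 (hℓ t y)) (hw t) (hW t)
      (hWpos t ht1) (hp t) (hℓp t) (hℓA t)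
  have hD : ∀ t ∈ Icc 1 T, |ℓp t - ℓ t x| ≤ 2 := fun t ht => by
    linarith [abs_sub (ℓp t) (ℓ t x), (hround t ht).1, abs_le.2 (hℓ t x)]
  have hA : ∑ t ∈ Icc 1 T, β t x (u t) * (ℓp t - ℓ t x)
      ≤ log M / √(log M / T) + 6 * √(log M / T) * T := by
    have h := sum_filter_le_log_inv_div_add_of_succ_eq_mul (g := (a · x)) (T := T)
      (d := fun t => β t x (u t) * (ℓp t - ℓ t x)) (P := fun _ => True) hεA0 hεA4
      (by rw [ha1]; positivity)
      ((single_le_sum (fun y _ => (hapos _ y (by omega)).le) (mem_univ x)).trans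
        (hasum _ (by omega)).le)
      (fun t ht _ => have hβt := hβpos t x (u t) (mem_Icc.1 ht).1
        abs_mul_le_of_nonneg_of_le_one hβt.1.le hβt.2.le (hD t ht))
      (fun t ht _ => by rw [ha t x (mem_Icc.1 ht).1, (hround t ht).2, hℓA, hz]; ring)
      (fun _ _ h => absurd trivial h)
    simpa [ha1] using h
  have hβ := fun v => sum_filter_confidence_gain_le (b := (β · x v))
    (D := fun t => ℓp t - ℓ t x) (T := T) (P := (u · = v)) hεB0 hεB4 (hβpos · x v) (hβ1 x v)
    (fun t ht _ => hD t ht) (fun t ht hv => by rw [← hv, hβu t x (mem_Icc.1 ht).1]; ring)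
    (fun t ht hv => hβo t x v (mem_Icc.1 ht).1 (Ne.symm hv))
  have h := sum_filter_mem_le_of_fiberwise_le (Icc 1 T) u H (fun t v => β t x v)
    (fun t => ℓp t - ℓ t x) hA (fun v _ => (hβ v).1) (fun v _ => (hβ v).2)
  rw [sum_sub_distrib, hcardU, Nat.card_Icc, add_tsub_cancel_right] at h
  linarith [learning_rate_tradeoff T.cast_nonneg (log_nonneg hM.le) N.cast_nonneg]

/-- Regret bound for the basic collaborative algorithm (Algorithm 1):
for every expert x and every honest set H, the loss on rounds involving users in H
exceeds that of x by at most 10·√(T·(ln M + N)). -/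
theorem algorithm1_regret_bound
    {U X : Type*} [Fintype U] [Fintype X] [DecidableEq U]
    (N M T : ℕ)
    (hcardU : Fintype.card U = N) (hcardX : Fintype.card X = M)
    (hN1 : 1 ≤ N) (hM2 : 2 ≤ M)
    (hTN : 16 * N ≤ T) (hTM : 16 * Real.log M ≤ (T : ℝ))
    (u : ℕ → U) (ℓ : ℕ → X → ℝ)
    (hℓ : ∀ t x, -1 ≤ ℓ t x ∧ ℓ t x ≤ 1)
    (εA εB : ℝ)
    (hεA : εA = Real.sqrt (Real.log M / T))
    (hεB : εB = Real.sqrt ((N : ℝ) / T))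
    (a : ℕ → X → ℝ) (β : ℕ → X → U → ℝ)
    (ha1 : ∀ x, a 1 x = 1 / M)
    (hβ1 : ∀ x v, β 1 x v = 1 / 2)
    (z : ℕ → X → ℝ) (hz : ∀ t x, z t x = β t x (u t))
    (w : ℕ → X → ℝ) (hw : ∀ t x, w t x = z t x * a t x)
    (W : ℕ → ℝ) (hW : ∀ t, W t = ∑ x, w t x)
    (p : ℕ → X → ℝ) (hp : ∀ t x, p t x = w t x / W t)
    (ℓp : ℕ → ℝ) (hℓp : ∀ t, ℓp t = ∑ x, p t x * ℓ t x)
    (ℓA : ℕ → X → ℝ)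
    (hℓA : ∀ t x, ℓA t x = z t x * ℓ t x + (1 - z t x) * ℓp t)
    (ha : ∀ t x, 1 ≤ t →
      a (t + 1) x = a t x * (1 + εA * ((∑ y, a t y * ℓA t y) - ℓA t x)))
    (hβu : ∀ t x, 1 ≤ t →
      β (t + 1) x (u t) = β t x (u t) *
        (1 + εB * ((β t x (u t) * ℓ t x + (1 - β t x (u t)) * ℓp t) - ℓ t x)))
    (hβo : ∀ t x v, 1 ≤ t → v ≠ u t → β (t + 1) x v = β t x v)
    (hapos : ∀ t x, 1 ≤ t → 0 < a t x)
    (hasum : ∀ t, 1 ≤ t → ∑ x, a t x = 1)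
    (hβpos : ∀ t x v, 1 ≤ t → 0 < β t x v ∧ β t x v < 1)
    (hWpos : ∀ t, 1 ≤ t → 0 < W t)
    (x : X) (H : Finset U) :
    ∑ t ∈ (Finset.Icc 1 T).filter (fun t => u t ∈ H), ℓp t ≤
      (∑ t ∈ (Finset.Icc 1 T).filter (fun t => u t ∈ H), ℓ t x)
        + 10 * Real.sqrt ((T : ℝ) * (Real.log M + N)) :=
  algorithm1_regret_bound_general N M T hcardU hN1 hM2 hTN hTM u ℓ hℓ εA εB hεA hεB a β ha1 hβ1 z hz
    w hw W hW p hp ℓp hℓp ℓA hℓA ha hβu hβo hapos hasum hβpos hWpos x H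
end

section
/- Variance-penalized excess loss bound for a participating expert (Lemma for the full algorithm): under the stated definitions, if the pair (x,V) satisfies the multiplicative-weights regret guarantee Σ_{t=1}^{T} ℓ_t^A(A_t) ≤ Σ_{t=1}^{T} ℓ_t^A(x,V) + ε·Σ_{t=1}^{T} (ℓ_t^A(A_t) − ℓ_t^A(x,V))² + R, then Σ_{t=1}^{T} z_t(x,V)·(ℓ_t(p_t) − ℓ_t(x)) ≤ ε·Σ_{t=1}^{T} z_t(x,V)·(ℓ_t(x) − ℓ_t(p_t))² + R. -/
/-!
Since the prediction `p_t` is the awake-weighted average of the experts, the mixed loss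
`ℓ_t^A` averages under `A_t` exactly to `ℓ_t(p_t)`. Hence the instantaneous regret
`ℓ_t^A(A_t) - ℓ_t^A(x,V)` equals `z_t(x,V) (ℓ_t(p_t) - ℓ_t(x))`, and its square is at most
`z_t(x,V) (ℓ_t(x) - ℓ_t(p_t))²` because `z_t(x,V) ∈ [0,1]`.
-/

open Finset

theorem sum_mul_mixedLoss_eq {ι : Type*} [Fintype ι] (A z L : ι → ℝ) (c : ℝ)
    (hA : ∑ i, A i = 1) (hc : ∑ i, z i * A i * L i = c * ∑ i, z i * A i) :
    ∑ i, A i * (z i * L i + (1 - z i) * c) = c := by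
  have hsplit : ∀ i,
      A i * (z i * L i + (1 - z i) * c) = z i * A i * L i + (A i - z i * A i) * c :=
    fun i => by ring
  simp only [hsplit, sum_add_distrib, ← sum_mul, sum_sub_distrib, hc, hA]
  ring

theorem sum_mul_fst_eq_sum_marginal_mul {X V : Type*} [Fintype X] [Fintype V]
    (w : X × V → ℝ) (p ℓ : X → ℝ) {W : ℝ} (hW : W ≠ 0) (hp : ∀ x, p x = (∑ v, w (x, v)) / W) :
    ∑ q, w q * ℓ q.1 = (∑ x, p x * ℓ x) * W := by
  rw [sum_mul, Fintype.sum_prod_type]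
  refine sum_congr rfl fun x _ => ?_
  simp only [hp, ← sum_mul]
  field_simp

theorem sq_mul_le_mul_sq {z : ℝ} (d : ℝ) (hz₀ : 0 ≤ z) (hz₁ : z ≤ 1) :
    (z * d) ^ 2 ≤ z * d ^ 2 := by
  have : 0 ≤ z * (1 - z) * d ^ 2 := by positivity
  linarith

theorem variance_penalized_specialist_lemma_general
    {X V : Type*} [Fintype X] [Fintype V]
    (T : ℕ)
    (A z : ℕ → X × V → ℝ) (ℓ : ℕ → X → ℝ)
    (hA : ∀ t ∈ Finset.Icc 1 T, (∀ q, 0 ≤ A t q) ∧ ∑ q, A t q = 1)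
    (hz : ∀ t ∈ Finset.Icc 1 T, ∀ q, 0 ≤ z t q ∧ z t q ≤ 1)
    (w : ℕ → X × V → ℝ) (hw : ∀ t q, w t q = z t q * A t q)
    (W : ℕ → ℝ) (hW : ∀ t, W t = ∑ q, w t q)
    (hWpos : ∀ t ∈ Finset.Icc 1 T, 0 < W t)
    (p : ℕ → X → ℝ) (hp : ∀ t x, p t x = (∑ v : V, w t (x, v)) / W t)
    (ℓp : ℕ → ℝ) (hℓp : ∀ t, ℓp t = ∑ x, p t x * ℓ t x)
    (ℓA : ℕ → X × V → ℝ)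
    (hℓA : ∀ t q, ℓA t q = z t q * ℓ t q.1 + (1 - z t q) * ℓp t)
    (ℓAA : ℕ → ℝ) (hℓAA : ∀ t, ℓAA t = ∑ q, A t q * ℓA t q)
    (q : X × V) (ε R : ℝ) (hε : 0 < ε)
    (hyp : ∑ t ∈ Finset.Icc 1 T, ℓAA t ≤
      ∑ t ∈ Finset.Icc 1 T, ℓA t q
        + ε * ∑ t ∈ Finset.Icc 1 T, (ℓAA t - ℓA t q) ^ 2 + R) :
    ∑ t ∈ Finset.Icc 1 T, z t q * (ℓp t - ℓ t q.1) ≤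
      ε * ∑ t ∈ Finset.Icc 1 T, z t q * (ℓ t q.1 - ℓp t) ^ 2 + R := by
  have hregret : ∀ t ∈ Icc 1 T, ℓAA t - ℓA t q = z t q * (ℓp t - ℓ t q.1) := by
    intro t ht
    have hprediction : ℓAA t = ℓp t := by
      have hawake := sum_mul_fst_eq_sum_marginal_mul (w t) (p t) (ℓ t) (hWpos t ht).ne' (hp t)
      rw [← hℓp, hW] at hawake
      simp only [hw] at hawake
      simp only [hℓAA, hℓA]
      exact sum_mul_mixedLoss_eq (A t) (z t) (fun q => ℓ t q.1) (ℓp t) (hA t ht).2 hawake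
    rw [hprediction, hℓA]
    ring
  have hvariance : ∑ t ∈ Icc 1 T, (ℓAA t - ℓA t q) ^ 2
      ≤ ∑ t ∈ Icc 1 T, z t q * (ℓ t q.1 - ℓp t) ^ 2 :=
    sum_le_sum fun t ht => by
      rw [hregret t ht, sub_sq_comm (ℓ t q.1)]
      exact sq_mul_le_mul_sq _ (hz t ht q).1 (hz t ht q).2
  calc ∑ t ∈ Icc 1 T, z t q * (ℓp t - ℓ t q.1)
      = ∑ t ∈ Icc 1 T, ℓAA t - ∑ t ∈ Icc 1 T, ℓA t q := by
        rw [← sum_sub_distrib]; exact (sum_congr rfl hregret).symm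
    _ ≤ ε * ∑ t ∈ Icc 1 T, (ℓAA t - ℓA t q) ^ 2 + R := by linarith
    _ ≤ ε * ∑ t ∈ Icc 1 T, z t q * (ℓ t q.1 - ℓp t) ^ 2 + R := by gcongr

/-- Variance-penalized excess loss bound for a participating expert
(Lemma for the full algorithm). -/
theorem variance_penalized_specialist_lemma
    {X V : Type*} [Fintype X] [Fintype V] [Nonempty X] [Nonempty V]
    (T : ℕ)
    (A z : ℕ → X × V → ℝ) (ℓ : ℕ → X → ℝ)
    (hA : ∀ t ∈ Finset.Icc 1 T, (∀ q, 0 ≤ A t q) ∧ ∑ q, A t q = 1)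
    (hz : ∀ t ∈ Finset.Icc 1 T, ∀ q, 0 ≤ z t q ∧ z t q ≤ 1)
    (hℓ : ∀ t ∈ Finset.Icc 1 T, ∀ x, -1 ≤ ℓ t x ∧ ℓ t x ≤ 1)
    (w : ℕ → X × V → ℝ) (hw : ∀ t q, w t q = z t q * A t q)
    (W : ℕ → ℝ) (hW : ∀ t, W t = ∑ q, w t q)
    (hWpos : ∀ t ∈ Finset.Icc 1 T, 0 < W t)
    (p : ℕ → X → ℝ) (hp : ∀ t x, p t x = (∑ v : V, w t (x, v)) / W t)
    (ℓp : ℕ → ℝ) (hℓp : ∀ t, ℓp t = ∑ x, p t x * ℓ t x)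
    (ℓA : ℕ → X × V → ℝ)
    (hℓA : ∀ t q, ℓA t q = z t q * ℓ t q.1 + (1 - z t q) * ℓp t)
    (ℓAA : ℕ → ℝ) (hℓAA : ∀ t, ℓAA t = ∑ q, A t q * ℓA t q)
    (q : X × V) (ε R : ℝ) (hε : 0 < ε)
    (hyp : ∑ t ∈ Finset.Icc 1 T, ℓAA t ≤
      ∑ t ∈ Finset.Icc 1 T, ℓA t q
        + ε * ∑ t ∈ Finset.Icc 1 T, (ℓAA t - ℓA t q) ^ 2 + R) :
    ∑ t ∈ Finset.Icc 1 T, z t q * (ℓp t - ℓ t q.1) ≤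
      ε * ∑ t ∈ Finset.Icc 1 T, z t q * (ℓ t q.1 - ℓp t) ^ 2 + R :=
  variance_penalized_specialist_lemma_general T A z ℓ hA hz w hw W hW hWpos p hp ℓp hℓp ℓA hℓA ℓAA
    hℓAA q ε R hε hyp
end

section
/- Main regret theorem (conditional form combining the two key lemmas of the full algorithm): under the stated hypotheses, Σ_{t≤T : u_t∈H} (−d_t) ≤ (C₁ + C₂ + 2)·( √(V_H·(ln M + ln ln T)) + (1 + ln M + ln ln T) + √(N·(V_H·α·ln(1/α) + V_D·(1−α)·ln(1/(1−α)))) + √(T·ln ln T) ). Equivalently, with d_t = ℓ_t(x) − ℓ_t(p_t), the total loss of the algorithm on rounds of H exceeds that of expert x by at most this amount. -/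
/-!
Adding the two hypotheses for one grid point `V = 2^k` cancels the weighted sums
`∑ z_t d_t` and `ε ∑ z_t d_t²`, leaving
`-∑_{u_t ∈ H} d_t ≤ ε V_H + C₁ (R₁ + R₂) + C₂ L / ε`, where `L = ln M + ln ln T` and
`R₁, R₂` are the two square roots in (i); the weights `z_t` play no further role.
Choosing `V` with `V ≤ max 1 V_H < 8 V` (possible because `V_H ≤ 4T` and the grid
reaches up to `T/2 < 2^⌊log₂ T⌋`) makes the tuned rate `ε = min 1 √(L / V)` give
`ε V_H ≤ 3 √(V_H L)` and `L / ε ≤ √(V_H L) + 1 + L`.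
-/

open Finset Real

lemma add_nonneg_of_sum_mul_le {ι : Type*} (s : Finset ι) (z d : ι → ℝ) (ε A B : ℝ)
    (h₁ : ∑ t ∈ s, z t * (d t + ε * d t ^ 2) ≤ A)
    (h₂ : ∑ t ∈ s, z t * -d t ≤ ε * ∑ t ∈ s, z t * d t ^ 2 + B) :
    0 ≤ A + B := by
  simp only [mul_add, mul_neg, sum_add_distrib, sum_neg_distrib, mul_left_comm _ ε,
    ← mul_sum] at h₁ h₂
  linarith

lemma sum_sq_le_card_mul_sq {ι : Type*} (s : Finset ι) (d : ι → ℝ) (b : ℝ)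
    (hd : ∀ t ∈ s, -b ≤ d t ∧ d t ≤ b) :
    ∑ t ∈ s, d t ^ 2 ≤ #s * b ^ 2 := by
  rw [← nsmul_eq_mul]
  refine sum_le_card_nsmul s _ _ fun t ht => ?_
  obtain ⟨h₁, h₂⟩ := hd t ht
  nlinarith

lemma one_lt_log_of_three_le {x : ℝ} (hx : 3 ≤ x) : 1 < log x := by
  rw [lt_log_iff_exp_lt (by linarith)]
  linarith [exp_one_lt_d9]

lemma exists_two_pow_le_lt_of_le_mul {W c : ℝ} {n : ℕ} (hW : 1 ≤ W) (hc : 1 ≤ c)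
    (hWn : W ≤ c * n) :
    ∃ k ≤ Nat.log 2 n, (2 : ℝ) ^ k ≤ W ∧ W < 2 * c * 2 ^ k := by
  have hm : ⌊W⌋₊ ≠ 0 := (Nat.floor_pos.mpr hW).ne'
  set k₀ := Nat.log 2 ⌊W⌋₊
  have hk₀_le : (2 : ℝ) ^ k₀ ≤ W :=
    calc (2 : ℝ) ^ k₀ ≤ ⌊W⌋₊ := by exact_mod_cast Nat.pow_log_le_self 2 hm
      _ ≤ W := Nat.floor_le (by linarith)
  have hk₀_lt : W < 2 * 2 ^ k₀ := by
    have : (⌊W⌋₊ : ℝ) + 1 ≤ 2 ^ (k₀ + 1) := by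
      exact_mod_cast Nat.lt_pow_succ_log_self one_lt_two ⌊W⌋₊
    linarith [Nat.lt_floor_add_one W, pow_succ (2 : ℝ) k₀]
  rcases le_total k₀ (Nat.log 2 n) with h | h
  · exact ⟨k₀, h, hk₀_le, by nlinarith [pow_pos (two_pos (α := ℝ)) k₀]⟩
  · refine ⟨Nat.log 2 n, le_rfl, (pow_le_pow_right₀ one_le_two h).trans hk₀_le, ?_⟩
    have : (n : ℝ) < 2 ^ (Nat.log 2 n + 1) := by
      exact_mod_cast Nat.lt_pow_succ_log_self one_lt_two n
    nlinarith [pow_succ (2 : ℝ) (Nat.log 2 n)]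

lemma min_one_sqrt_div_mul_le {L V x : ℝ} (hL : 0 ≤ L) (hV : 0 < V) (hx : 0 ≤ x)
    (hxV : x ≤ 8 * V) :
    min 1 √(L / V) * x ≤ 3 * √(x * L) := by
  have hε : min 1 √(L / V) ^ 2 ≤ L / V := by
    refine (pow_le_pow_left₀ (by positivity) (min_le_right _ _) 2).trans ?_
    rw [sq_sqrt (by positivity)]
  have : (min 1 √(L / V) * x) ^ 2 ≤ 9 * (x * L) := by
    calc (min 1 √(L / V) * x) ^ 2 ≤ L / V * x * x := by
          rw [mul_pow, sq x, ← mul_assoc]; gcongr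
      _ ≤ L / V * (8 * V) * x := by gcongr
      _ = 8 * (x * L) := by field_simp
      _ ≤ 9 * (x * L) := by nlinarith [mul_nonneg hx hL]
  calc min 1 √(L / V) * x ≤ √(9 * (x * L)) := le_sqrt_of_sq_le this
    _ = 3 * √(x * L) := by rw [sqrt_mul (by norm_num), show (9 : ℝ) = 3 ^ 2 by norm_num,
          sqrt_sq (by norm_num)]

lemma div_min_one_sqrt_div_le {L V x : ℝ} (hL : 0 < L) (hV : 0 < V) (hx : 0 ≤ x)
    (hVx : V ≤ 1 + x) :
    L / min 1 √(L / V) ≤ √(x * L) + 1 + L := by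
  rcases le_total 1 √(L / V) with h | h
  · rw [min_eq_left h, div_one]
    linarith [sqrt_nonneg (x * L)]
  · have hdiv : L / √(L / V) = √(L * V) := by
      rw [div_eq_iff (by positivity), ← sqrt_mul (by positivity),
        show L * V * (L / V) = L ^ 2 by field_simp, sqrt_sq hL.le]
    rw [min_eq_right h, hdiv, sqrt_le_left (by positivity)]
    have hA := sq_sqrt (mul_nonneg hx hL.le)
    nlinarith [sqrt_nonneg (x * L), mul_le_mul_of_nonneg_left hVx hL.le]

theorem main_regret_theorem_general
    {U : Type*} [DecidableEq U]
    (T N M : ℕ) (hT : 3 ≤ T) (hM2 : 2 ≤ M)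
    (u : ℕ → U) (H : Finset U)
    (d : ℕ → ℝ) (hd : ∀ t ∈ Finset.Icc 1 T, -2 ≤ d t ∧ d t ≤ 2)
    (VH VD α : ℝ)
    (hVH : VH = ∑ t ∈ (Finset.Icc 1 T).filter (fun t => u t ∈ H), (d t) ^ 2)
    (C₁ C₂ : ℝ) (hC₁ : 1 ≤ C₁) (hC₂ : 1 ≤ C₂)
    (hyp : ∀ V εV : ℝ, (∃ k : ℕ, k ≤ Nat.log 2 T ∧ V = (2 : ℝ) ^ k) →
      εV = min 1 (Real.sqrt ((Real.log M + Real.log (Real.log T)) / V)) →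
      ∃ zV : ℕ → ℝ, (∀ t ∈ Finset.Icc 1 T, 0 ≤ zV t ∧ zV t ≤ 1) ∧
        (∑ t ∈ Finset.Icc 1 T, zV t * (d t + εV * (d t) ^ 2) ≤
          (∑ t ∈ (Finset.Icc 1 T).filter (fun t => u t ∈ H), d t)
            + εV * VH
            + C₁ * (Real.sqrt ((N : ℝ) * (VH * α * Real.log (1 / α)
                + VD * (1 - α) * Real.log (1 / (1 - α))))
              + Real.sqrt ((T : ℝ) * Real.log (Real.log T)))) ∧
        (∑ t ∈ Finset.Icc 1 T, zV t * (-(d t)) ≤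
          εV * ∑ t ∈ Finset.Icc 1 T, zV t * (d t) ^ 2
            + C₂ * (Real.log M + Real.log (Real.log T)) / εV)) :
    ∑ t ∈ (Finset.Icc 1 T).filter (fun t => u t ∈ H), (-(d t)) ≤
      (C₁ + C₂ + 2) *
        (Real.sqrt (VH * (Real.log M + Real.log (Real.log T)))
          + (1 + Real.log M + Real.log (Real.log T))
          + Real.sqrt ((N : ℝ) * (VH * α * Real.log (1 / α)
              + VD * (1 - α) * Real.log (1 / (1 - α))))
          + Real.sqrt ((T : ℝ) * Real.log (Real.log T))) := by
  set L := log M + log (log T)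
  set R₁ := √(N * (VH * α * log (1 / α) + VD * (1 - α) * log (1 / (1 - α))))
  set R₂ := √(T * log (log T))
  have hT3 : (3 : ℝ) ≤ T := by exact_mod_cast hT
  have hL : 0 < L :=
    add_pos (log_pos (by exact_mod_cast hM2)) (log_pos (one_lt_log_of_three_le hT3))
  have hVH0 : 0 ≤ VH := hVH ▸ sum_nonneg fun t _ => sq_nonneg (d t)
  have hVHT : VH ≤ 4 * T := by
    have hcard : (#{t ∈ Icc 1 T | u t ∈ H} : ℝ) ≤ T := by
      exact_mod_cast (card_filter_le _ _).trans (Nat.card_Icc 1 T).le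
    calc VH ≤ #{t ∈ Icc 1 T | u t ∈ H} * (2 : ℝ) ^ 2 :=
          hVH ▸ sum_sq_le_card_mul_sq _ d 2 fun t ht => hd t (mem_filter.mp ht).1
      _ ≤ 4 * T := by linarith
  obtain ⟨k, hk, hVle, hVlt⟩ := exists_two_pow_le_lt_of_le_mul (W := max 1 VH) (c := 4) (n := T)
    (le_max_left _ _) (by norm_num) (max_le (by linarith) hVHT)
  obtain ⟨z, -, h₁, h₂⟩ := hyp (2 ^ k) _ ⟨k, hk, rfl⟩ rfl
  have hregret := add_nonneg_of_sum_mul_le _ z d _ _ _ h₁ h₂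
  have hεVH := min_one_sqrt_div_mul_le hL.le (V := 2 ^ k) (by positivity) hVH0
    (by linarith [le_max_right 1 VH])
  have hLε := div_min_one_sqrt_div_le hL (V := 2 ^ k) (by positivity) hVH0
    (hVle.trans (max_le (by linarith) (by linarith)))
  have hR : 0 ≤ R₁ + R₂ := by positivity
  have hA : 0 ≤ √(VH * L) := sqrt_nonneg _
  rw [mul_div_assoc] at hregret
  rw [sum_neg_distrib, add_assoc 1 (log M)]
  calc _ ≤ min 1 √(L / 2 ^ k) * VH + C₁ * (R₁ + R₂)
          + C₂ * (L / min 1 √(L / 2 ^ k)) := by linarith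
    _ ≤ 3 * √(VH * L) + C₁ * (R₁ + R₂) + C₂ * (√(VH * L) + 1 + L) := by gcongr
    _ ≤ (C₁ + C₂ + 2) * (√(VH * L) + (1 + L) + R₁ + R₂) := by
        nlinarith [mul_nonneg (sub_nonneg.mpr hC₁) hA]

/-- Main regret theorem (conditional form combining the two key lemmas
of the full algorithm). -/
theorem main_regret_theorem
    {U : Type*} [Fintype U] [DecidableEq U]
    (T N M : ℕ) (hT : 3 ≤ T) (hcardU : Fintype.card U = N) (hN1 : 1 ≤ N) (hM2 : 2 ≤ M)
    (u : ℕ → U) (H : Finset U)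
    (d : ℕ → ℝ) (hd : ∀ t ∈ Finset.Icc 1 T, -2 ≤ d t ∧ d t ≤ 2)
    (VH VD α : ℝ)
    (hVH : VH = ∑ t ∈ (Finset.Icc 1 T).filter (fun t => u t ∈ H), (d t) ^ 2)
    (hVD : VD = ∑ t ∈ (Finset.Icc 1 T).filter (fun t => u t ∉ H), (d t) ^ 2)
    (hα : α = (H.card : ℝ) / N)
    (C₁ C₂ : ℝ) (hC₁ : 1 ≤ C₁) (hC₂ : 1 ≤ C₂)
    (hyp : ∀ V εV : ℝ, (∃ k : ℕ, k ≤ Nat.log 2 T ∧ V = (2 : ℝ) ^ k) →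
      εV = min 1 (Real.sqrt ((Real.log M + Real.log (Real.log T)) / V)) →
      ∃ zV : ℕ → ℝ, (∀ t ∈ Finset.Icc 1 T, 0 ≤ zV t ∧ zV t ≤ 1) ∧
        (∑ t ∈ Finset.Icc 1 T, zV t * (d t + εV * (d t) ^ 2) ≤
          (∑ t ∈ (Finset.Icc 1 T).filter (fun t => u t ∈ H), d t)
            + εV * VH
            + C₁ * (Real.sqrt ((N : ℝ) * (VH * α * Real.log (1 / α)
                + VD * (1 - α) * Real.log (1 / (1 - α))))
              + Real.sqrt ((T : ℝ) * Real.log (Real.log T)))) ∧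
        (∑ t ∈ Finset.Icc 1 T, zV t * (-(d t)) ≤
          εV * ∑ t ∈ Finset.Icc 1 T, zV t * (d t) ^ 2
            + C₂ * (Real.log M + Real.log (Real.log T)) / εV)) :
    ∑ t ∈ (Finset.Icc 1 T).filter (fun t => u t ∈ H), (-(d t)) ≤
      (C₁ + C₂ + 2) *
        (Real.sqrt (VH * (Real.log M + Real.log (Real.log T)))
          + (1 + Real.log M + Real.log (Real.log T))
          + Real.sqrt ((N : ℝ) * (VH * α * Real.log (1 / α)
              + VD * (1 - α) * Real.log (1 / (1 - α))))
          + Real.sqrt ((T : ℝ) * Real.log (Real.log T))) :=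
  main_regret_theorem_general T N M hT hM2 u H d hd VH VD α hVH C₁ C₂ hC₁ hC₂ hyp
end

section
/- Guarantee for MWM_θ (conditional form of Theorem on learning the base rate): if additionally there are reals p_t ∈ [0,1] with Σ_{t=1}^{T} p_t·ℓ_t ≤ Σ_{t=1}^{T} z_t^{u_t}·ℓ_t + C·√(T·(ln ln N + ln ln T)), then Σ_{t=1}^{T} p_t·ℓ_t ≤ Σ_{t≤T : u_t∈H} ℓ_t + (2C+1)·( √(V_H·N_H·ln(N/N_H)) + √(V_D·N_D·ln(N/N_D)) + √(T·(ln ln N + ln ln T)) ). -/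
/-!
Split the comparator's loss by user. On each user the per-user guarantee contributes a
term `V_u ε` and a term `C ln(N/N_G) / ε`; summed over a group `G` these are at most
`V_G ε + N_G C ln(N/N_G) / ε`, and the tuned `ε = √(N_G ln(N/N_G) / V_G)` turns both into
multiples of `√(V_G N_G ln(N/N_G))`, so the group costs `(1 + C) √(V_G N_G ln(N/N_G))`.
Adding the two groups and the hypothesised gap between `p` and `z` gives the bound.
-/

open Finset Real

theorem mul_sqrt_div_eq_sqrt_mul {V : ℝ} (hV : 0 ≤ V) (x : ℝ) : V * √(x / V) = √(V * x) := by
  rw [← sqrt_sq hV, ← sqrt_mul (sq_nonneg V), sqrt_sq hV]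
  rcases hV.eq_or_lt with rfl | hV
  · simp
  · congr 1; field_simp

theorem div_sqrt_div_eq_sqrt_mul {V x : ℝ} (hV : 0 ≤ V) (hx : 0 ≤ x) : x / √(x / V) = √(V * x) := by
  rw [sqrt_div hx, div_div_eq_mul_div, mul_div_right_comm, div_sqrt, sqrt_mul hV, mul_comm]

theorem sum_mul_sqrt_add_div_sqrt_le {ι : Type*} (G : Finset ι) (w : ι → ℝ) {V n L C : ℝ}
    (hV : 0 ≤ V) (hw : ∑ v ∈ G, w v ≤ V) (hn : (#G : ℝ) ≤ n) (hC : 0 ≤ C) :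
    ∑ v ∈ G, (w v * √(n * L / V) + C * L / √(n * L / V)) ≤ (1 + C) * √(V * n * L) := by
  set ε := √(n * L / V)
  -- if `n L / V ≤ 0` then `ε = 0`, and every term vanishes since `x / 0 = 0`
  by_cases hε : n * L / V ≤ 0
  · have : ε = 0 := sqrt_eq_zero'.2 hε
    simp only [this, mul_zero, div_zero, add_zero, sum_const_zero]
    positivity
  rw [not_le] at hε
  have hVpos : 0 < V := lt_of_le_of_ne hV fun h => by simp [← h] at hε
  have hnL : 0 < n * L := by simpa [hVpos] using mul_pos hε hVpos
  have hL : 0 < L := pos_of_mul_pos_right hnL (le_trans (Nat.cast_nonneg _) hn)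
  calc ∑ v ∈ G, (w v * ε + C * L / ε)
      = (∑ v ∈ G, w v) * ε + #G * (C * L / ε) := by
        rw [sum_add_distrib, ← sum_mul, sum_const, nsmul_eq_mul]
    _ ≤ V * ε + n * (C * L / ε) := by gcongr
    _ = V * ε + C * (n * L / ε) := by ring
    _ = (1 + C) * √(V * n * L) := by
        rw [mul_sqrt_div_eq_sqrt_mul hV, div_sqrt_div_eq_sqrt_mul hV hnL.le, mul_assoc]; ring

theorem sum_fiberwise_add_sum_fiberwise_compl {ι κ M : Type*} [Fintype κ] [DecidableEq κ]
    [AddCommMonoid M] (s : Finset ι) (g : ι → κ) (G : Finset κ) (f : κ → ι → M) :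
    ∑ j ∈ G, ∑ i ∈ s with g i = j, f j i + ∑ j ∈ Gᶜ, ∑ i ∈ s with g i = j, f j i =
      ∑ i ∈ s, f (g i) i := by
  rw [sum_add_sum_compl, ← sum_fiberwise s g]
  exact sum_congr rfl fun j _ => sum_congr rfl fun i hi => by rw [(mem_filter.1 hi).2]

theorem mwm_theta_guarantee_general
    {U : Type*} [Fintype U] [DecidableEq U]
    (N : ℕ)
    (H : Finset U)
    (T : ℕ) (u : ℕ → U) (ℓ : ℕ → ℝ)
    (C NH ND VH VD : ℝ) (hC : 1 ≤ C)
    (hNH : (H.card : ℝ) ≤ NH ∧ NH < N)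
    (hND : ((Hᶜ.card : ℕ) : ℝ) ≤ ND ∧ ND < N)
    (hVH : 0 < VH) (hVD : 0 < VD)
    (Vu : U → ℝ)
    (hVuH : ∑ v ∈ H, Vu v ≤ VH) (hVuD : ∑ v ∈ Hᶜ, Vu v ≤ VD)
    (εH εD : ℝ)
    (hεH : εH = Real.sqrt (NH * Real.log ((N : ℝ) / NH) / VH))
    (hεD : εD = Real.sqrt (ND * Real.log ((N : ℝ) / ND) / VD))
    (z : U → ℕ → ℝ)
    (hzH : ∀ v ∈ H,
      ∑ t ∈ (Finset.Icc 1 T).filter (fun t => u t = v), z v t * ℓ t ≤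
        (∑ t ∈ (Finset.Icc 1 T).filter (fun t => u t = v), ℓ t)
          + Vu v * εH + C * Real.log ((N : ℝ) / NH) / εH)
    (hzD : ∀ v ∈ Hᶜ,
      ∑ t ∈ (Finset.Icc 1 T).filter (fun t => u t = v), z v t * ℓ t ≤
        Vu v * εD + C * Real.log ((N : ℝ) / ND) / εD)
    (p : ℕ → ℝ)
    (hpz : ∑ t ∈ Finset.Icc 1 T, p t * ℓ t ≤
      ∑ t ∈ Finset.Icc 1 T, z (u t) t * ℓ t
        + C * Real.sqrt ((T : ℝ) * (Real.log (Real.log N) + Real.log (Real.log T)))) :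
    ∑ t ∈ Finset.Icc 1 T, p t * ℓ t ≤
      (∑ t ∈ (Finset.Icc 1 T).filter (fun t => u t ∈ H), ℓ t)
        + (2 * C + 1) * (Real.sqrt (VH * NH * Real.log ((N : ℝ) / NH))
          + Real.sqrt (VD * ND * Real.log ((N : ℝ) / ND))
          + Real.sqrt ((T : ℝ) * (Real.log (Real.log N) + Real.log (Real.log T)))) := by
  subst hεH hεD
  have hC0 : 0 ≤ C := by linarith
  have hHtuned := sum_mul_sqrt_add_div_sqrt_le H Vu hVH.le hVuH hNH.1 hC0 (L := log (N / NH))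
  have hDtuned := sum_mul_sqrt_add_div_sqrt_le Hᶜ Vu hVD.le hVuD hND.1 hC0 (L := log (N / ND))
  have hHsum := sum_le_sum fun v hv => (hzH v hv).trans_eq (add_assoc _ _ _)
  rw [sum_add_distrib, sum_fiberwise_eq_sum_filter] at hHsum
  have hDsum := sum_le_sum hzD
  rw [← sum_fiberwise_add_sum_fiberwise_compl _ u H fun v t => z v t * ℓ t] at hpz
  have hA := mul_nonneg hC0 (sqrt_nonneg (VH * NH * log (N / NH)))
  have hB := mul_nonneg hC0 (sqrt_nonneg (VD * ND * log (N / ND)))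
  have hS := sqrt_nonneg (T * (log (log N) + log (log T)))
  have hCS := mul_nonneg hC0 hS
  linarith

/-- Guarantee for MWM_θ (conditional form of the theorem on learning
the base rate). -/
theorem mwm_theta_guarantee
    {U : Type*} [Fintype U] [DecidableEq U]
    (N : ℕ) (hcardU : Fintype.card U = N)
    (H : Finset U) (hH1 : H.Nonempty) (hH2 : H ≠ Finset.univ)
    (T : ℕ) (u : ℕ → U) (ℓ : ℕ → ℝ)
    (hℓ : ∀ t ∈ Finset.Icc 1 T, -1 ≤ ℓ t ∧ ℓ t ≤ 1)
    (C NH ND VH VD : ℝ) (hC : 1 ≤ C)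
    (hNH : (H.card : ℝ) ≤ NH ∧ NH < N)
    (hND : ((Hᶜ.card : ℕ) : ℝ) ≤ ND ∧ ND < N)
    (hVH : 0 < VH) (hVD : 0 < VD)
    (Vu : U → ℝ) (hVu : ∀ v, 0 ≤ Vu v)
    (hVuH : ∑ v ∈ H, Vu v ≤ VH) (hVuD : ∑ v ∈ Hᶜ, Vu v ≤ VD)
    (εH εD : ℝ)
    (hεH : εH = Real.sqrt (NH * Real.log ((N : ℝ) / NH) / VH))
    (hεD : εD = Real.sqrt (ND * Real.log ((N : ℝ) / ND) / VD))
    (z : U → ℕ → ℝ)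
    (hz : ∀ v, ∀ t ∈ Finset.Icc 1 T, 0 ≤ z v t ∧ z v t ≤ 1)
    (hzH : ∀ v ∈ H,
      ∑ t ∈ (Finset.Icc 1 T).filter (fun t => u t = v), z v t * ℓ t ≤
        (∑ t ∈ (Finset.Icc 1 T).filter (fun t => u t = v), ℓ t)
          + Vu v * εH + C * Real.log ((N : ℝ) / NH) / εH)
    (hzD : ∀ v ∈ Hᶜ,
      ∑ t ∈ (Finset.Icc 1 T).filter (fun t => u t = v), z v t * ℓ t ≤
        Vu v * εD + C * Real.log ((N : ℝ) / ND) / εD)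
    (hN3 : 3 ≤ N) (hT3 : 3 ≤ T)
    (p : ℕ → ℝ) (hp : ∀ t ∈ Finset.Icc 1 T, 0 ≤ p t ∧ p t ≤ 1)
    (hpz : ∑ t ∈ Finset.Icc 1 T, p t * ℓ t ≤
      ∑ t ∈ Finset.Icc 1 T, z (u t) t * ℓ t
        + C * Real.sqrt ((T : ℝ) * (Real.log (Real.log N) + Real.log (Real.log T)))) :
    ∑ t ∈ Finset.Icc 1 T, p t * ℓ t ≤
      (∑ t ∈ (Finset.Icc 1 T).filter (fun t => u t ∈ H), ℓ t)
        + (2 * C + 1) * (Real.sqrt (VH * NH * Real.log ((N : ℝ) / NH))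
          + Real.sqrt (VD * ND * Real.log ((N : ℝ) / ND))
          + Real.sqrt ((T : ℝ) * (Real.log (Real.log N) + Real.log (Real.log T)))) :=
  mwm_theta_guarantee_general N H T u ℓ C NH ND VH VD hC hNH hND hVH hVD Vu hVuH hVuD εH εD hεH hεD
    z hzH hzD p hpz
end
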